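/- Let F be a field with char F ≠ 2, α ∈ F with α ∉ {0,1}, ζ ∈ F a root of x² − (4α−2)x + 1, μ = −(1+ζ)/4, ν = −(1+ζ⁻¹)/4, and in 𝔍(α) set s = (1/(4(α−1)))(μ𝔞 + 𝔞·𝔟 + ν𝔟) and t = (1/(α(α−1)))(ν𝔞 + 𝔞·𝔟 + μ𝔟). Let ρ = τ_𝔟 ∘ τ_𝔞 (first apply the Miyamoto involution of 𝔞, then that of 𝔟). Then ρ(s) = ζ⁻²s, ρ(t) = ζ²t, and ρ fixes the identity 1 = (2/(α−1))σ of 𝔍(α). -/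
import Mathlib


namespace JordanHalf

variable {F : Type*} [Field F] {A : Type*} [AddCommGroup A] [Module F A]

/-- The `lam`-eigenspace of the adjoint map `ad_a` for the bilinear multiplication `mul`. -/
def eig (mul : A →ₗ[F] A →ₗ[F] A) (a : A) (lam : F) : Submodule F A :=
  Module.End.eigenspace (mul a) lam

/-- `a` is a primitive axis of Jordan type `1/2` for the multiplication `mul`. -/
def IsPrimitiveAxis (mul : A →ₗ[F] A →ₗ[F] A) (a : A) : Prop :=
  mul a a = a ∧
  (eig mul a 1 ⊔ eig mul a 0 ⊔ eig mul a (2⁻¹ : F) = ⊤) ∧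
  eig mul a 1 = Submodule.span F {a} ∧
  (∀ x ∈ eig mul a 1, ∀ y ∈ eig mul a 0, mul x y = 0) ∧
  (∀ x ∈ eig mul a 0, ∀ y ∈ eig mul a 0, mul x y ∈ eig mul a 0) ∧
  (∀ x ∈ eig mul a 1, ∀ y ∈ eig mul a (2⁻¹ : F), mul x y ∈ eig mul a (2⁻¹ : F)) ∧
  (∀ x ∈ eig mul a 0, ∀ y ∈ eig mul a (2⁻¹ : F), mul x y ∈ eig mul a (2⁻¹ : F)) ∧
  (∀ x ∈ eig mul a (2⁻¹ : F), ∀ y ∈ eig mul a (2⁻¹ : F),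
    mul x y ∈ eig mul a 1 ⊔ eig mul a 0)

/-- The multiplication of the 3-dimensional algebra `𝔍(α)` with respect to the basis
`𝔞 = ![1,0,0]`, `𝔟 = ![0,1,0]`, `σ = ![0,0,1]`. -/
def JmulFun (α : F) (u v : Fin 3 → F) : Fin 3 → F :=
  ![u 0 * v 0 + (u 0 * v 1 + u 1 * v 0) / 2 + (α - 1) / 2 * (u 0 * v 2 + u 2 * v 0),
    u 1 * v 1 + (u 0 * v 1 + u 1 * v 0) / 2 + (α - 1) / 2 * (u 1 * v 2 + u 2 * v 1),
    (u 0 * v 1 + u 1 * v 0) + (α - 1) / 2 * (u 2 * v 2)]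

/-- The multiplication of `𝔍(α)` bundled as a bilinear map. -/
def Jmul (α : F) : (Fin 3 → F) →ₗ[F] (Fin 3 → F) →ₗ[F] (Fin 3 → F) :=
  LinearMap.mk₂ F (JmulFun α)
    (by intro m₁ m₂ n; funext i; fin_cases i <;>
      simp [JmulFun, Pi.add_apply] <;> ring)
    (by intro c m n; funext i; fin_cases i <;>
      simp [JmulFun, Pi.smul_apply, smul_eq_mul] <;> ring)
    (by intro m n₁ n₂; funext i; fin_cases i <;>
      simp [JmulFun, Pi.add_apply] <;> ring)
    (by intro c m n; funext i; fin_cases i <;>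
      simp [JmulFun, Pi.smul_apply, smul_eq_mul] <;> ring)

end JordanHalf

open JordanHalf

set_option maxHeartbeats 2000000 in
/-- **Corollary (action of ρ on J).** In `𝔍(α)` with `α ∉ {0,1}`, `ζ` a root of
`x² − (4α−2)x + 1`, `μ = −(1+ζ)/4`, `ν = −(1+ζ⁻¹)/4`,
`s = (1/(4(α−1)))(μ𝔞 + 𝔞⬝𝔟 + ν𝔟)`, `t = (1/(α(α−1)))(ν𝔞 + 𝔞⬝𝔟 + μ𝔟)`, and
`ρ = τ_𝔟 ∘ τ_𝔞` the product of the Miyamoto involutions of the axes `𝔞` and `𝔟`: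
`ρ(s) = ζ⁻²s`, `ρ(t) = ζ²t`, and `ρ` fixes the identity `1 = (2/(α−1))σ`. -/
theorem rho_action_on_J {F : Type*} [Field F] (hchar : (2 : F) ≠ 0)
    (α : F) (hα0 : α ≠ 0) (hα1 : α ≠ 1)
    (ζ : F) (hζ : ζ ^ 2 - (4 * α - 2) * ζ + 1 = 0)
    (μ ν : F) (hμ : μ = -(1 + ζ) / 4) (hν : ν = -(1 + ζ⁻¹) / 4)
    (s t oneJ : Fin 3 → F)
    (hs : s = (4 * (α - 1))⁻¹ • (μ • ![1, 0, 0] + JmulFun α ![1, 0, 0] ![0, 1, 0] +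
      ν • ![0, 1, 0]))
    (ht : t = (α * (α - 1))⁻¹ • (ν • ![1, 0, 0] + JmulFun α ![1, 0, 0] ![0, 1, 0] +
      μ • ![0, 1, 0]))
    (hone : oneJ = (2 / (α - 1)) • ![0, 0, 1])
    (τa τb : (Fin 3 → F) →ₗ[F] (Fin 3 → F))
    (hτa1 : ∀ x ∈ eig (Jmul α) ![1, 0, 0] 1, τa x = x)
    (hτa0 : ∀ x ∈ eig (Jmul α) ![1, 0, 0] 0, τa x = x)
    (hτah : ∀ x ∈ eig (Jmul α) ![1, 0, 0] (2⁻¹ : F), τa x = -x)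
    (hτb1 : ∀ x ∈ eig (Jmul α) ![0, 1, 0] 1, τb x = x)
    (hτb0 : ∀ x ∈ eig (Jmul α) ![0, 1, 0] 0, τb x = x)
    (hτbh : ∀ x ∈ eig (Jmul α) ![0, 1, 0] (2⁻¹ : F), τb x = -x) :
    τb (τa s) = (ζ⁻¹) ^ 2 • s ∧ τb (τa t) = ζ ^ 2 • t ∧ τb (τa oneJ) = oneJ := by
  have hζ0 : ζ ≠ 0 := by
    intro h; rw [h] at hζ; simp at hζ
  have hα1' : α - 1 ≠ 0 := sub_ne_zero.mpr hα1
  have hinv : ζ⁻¹ = (4 * α - 2) - ζ := by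
    have h : ζ * ((4 * α - 2) - ζ) = 1 := by linear_combination -hζ
    exact inv_eq_of_mul_eq_one_right h
  have hν' : ν = -(1 + ((4 * α - 2) - ζ)) / 4 := by rw [hν, hinv]
  -- eigenvectors of ad_a (a = ![1,0,0])
  have ea1 : τa ![1, 0, 0] = ![1, 0, 0] := by
    apply hτa1
    rw [eig, Module.End.mem_eigenspace_iff]
    funext i; fin_cases i <;> (simp [Jmul, JmulFun]; try ring)
  have ea0 : τa ![1 - α, 0, 2] = ![1 - α, 0, 2] := by
    apply hτa0
    rw [eig, Module.End.mem_eigenspace_iff]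
    funext i; fin_cases i <;> (simp [Jmul, JmulFun]; try field_simp; try ring)
  have eah : τa ![1 - 2 * α, 1, 2] = -![1 - 2 * α, 1, 2] := by
    apply hτah
    rw [eig, Module.End.mem_eigenspace_iff]
    funext i; fin_cases i <;> (simp [Jmul, JmulFun]; try field_simp; try ring)
  -- eigenvectors of ad_b (b = ![0,1,0])
  have eb1 : τb ![0, 1, 0] = ![0, 1, 0] := by
    apply hτb1
    rw [eig, Module.End.mem_eigenspace_iff]
    funext i; fin_cases i <;> (simp [Jmul, JmulFun]; try ring)
  have eb0 : τb ![0, 1 - α, 2] = ![0, 1 - α, 2] := by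
    apply hτb0
    rw [eig, Module.End.mem_eigenspace_iff]
    funext i; fin_cases i <;> (simp [Jmul, JmulFun]; try field_simp; try ring)
  have ebh : τb ![1, 1 - 2 * α, 2] = -![1, 1 - 2 * α, 2] := by
    apply hτbh
    rw [eig, Module.End.mem_eigenspace_iff]
    funext i; fin_cases i <;> (simp [Jmul, JmulFun]; try field_simp; try ring)
  -- expansion of a vector in the standard basis
  have expand : ∀ v : Fin 3 → F,
      v = v 0 • ![1, 0, 0] + v 1 • ![0, 1, 0] + v 2 • ![0, 0, 1] := by
    intro v; funext i; fin_cases i <;> simp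
  -- τa on the standard basis
  have ea_e1 : τa ![0, 1, 0] = ![4 * α - 2, -1, -4] := by
    have hdec : (![0, 1, 0] : Fin 3 → F)
        = α • ![1, 0, 0] - ![1 - α, 0, 2] + ![1 - 2 * α, 1, 2] := by
      funext i; fin_cases i <;> (simp; try ring)
    rw [hdec, map_add, map_sub, map_smul, ea1, ea0, eah]
    funext i; fin_cases i <;> (simp; try ring)
  have ea_e2 : τa ![0, 0, 1] = ![0, 0, 1] := by
    have hdec : (![0, 0, 1] : Fin 3 → F)
        = ((α - 1) / 2) • ![1, 0, 0] + (2⁻¹ : F) • ![1 - α, 0, 2] := by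
      funext i; fin_cases i <;> (simp; try field_simp; try ring)
    nth_rewrite 1 [hdec]
    rw [map_add, map_smul, map_smul, ea1, ea0]
    funext i; fin_cases i <;> (simp; try field_simp; try ring)
  -- τb on the standard basis
  have eb_e0 : τb ![1, 0, 0] = ![-1, 4 * α - 2, -4] := by
    have hdec : (![1, 0, 0] : Fin 3 → F)
        = α • ![0, 1, 0] - ![0, 1 - α, 2] + ![1, 1 - 2 * α, 2] := by
      funext i; fin_cases i <;> (simp; try ring)
    rw [hdec, map_add, map_sub, map_smul, eb1, eb0, ebh]
    funext i; fin_cases i <;> (simp; try ring)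
  have eb_e2 : τb ![0, 0, 1] = ![0, 0, 1] := by
    have hdec : (![0, 0, 1] : Fin 3 → F)
        = ((α - 1) / 2) • ![0, 1, 0] + (2⁻¹ : F) • ![0, 1 - α, 2] := by
      funext i; fin_cases i <;> (simp; try field_simp; try ring)
    nth_rewrite 1 [hdec]
    rw [map_add, map_smul, map_smul, eb1, eb0]
    funext i; fin_cases i <;> (simp; try field_simp; try ring)
  -- explicit formulas for τa and τb
  have appτa : ∀ v : Fin 3 → F,
      τa v = ![v 0 + (4 * α - 2) * v 1, -(v 1), -4 * v 1 + v 2] := by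
    intro v
    have h1 := congrArg τa (expand v)
    rw [map_add, map_add, map_smul, map_smul, map_smul, ea1, ea_e1, ea_e2] at h1
    rw [h1]; funext i; fin_cases i <;> (simp; try ring)
  have appτb : ∀ v : Fin 3 → F,
      τb v = ![-(v 0), (4 * α - 2) * v 0 + v 1, -4 * v 0 + v 2] := by
    intro v
    have h1 := congrArg τb (expand v)
    rw [map_add, map_add, map_smul, map_smul, map_smul, eb_e0, eb1, eb_e2] at h1
    rw [h1]; funext i; fin_cases i <;> (simp; try ring)
  have h4 : (4 : F) ≠ 0 := by
    have h : (4 : F) = 2 * 2 := by norm_num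
    rw [h]; exact mul_ne_zero hchar hchar
  have h4a : (4 * (α - 1)) ≠ 0 := mul_ne_zero h4 hα1'
  have h16a : (16 * (α - 1)) ≠ 0 := by
    have h : (16 : F) * (α - 1) = 4 * (4 * (α - 1)) := by ring
    rw [h]; exact mul_ne_zero h4 h4a
  have haa : (α * (α - 1)) ≠ 0 := mul_ne_zero hα0 hα1'
  have h4aa : (4 * (α * (α - 1))) ≠ 0 := mul_ne_zero h4 haa
  have h2i : (2:F) * 2⁻¹ = 1 := mul_inv_cancel₀ hchar
  have h4i : (4:F) * 4⁻¹ = 1 := mul_inv_cancel₀ h4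
  -- the rescaled vectors
  have hs4 : (16 * (α - 1)) • s = ![1 - ζ, 3 - 4 * α + ζ, 4] := by
    rw [hs, smul_smul]
    have hc : 16 * (α - 1) * (4 * (α - 1))⁻¹ = 4 := by
      rw [mul_inv_eq_iff_eq_mul₀ h4a]; ring
    rw [hc]
    funext i; fin_cases i
    · simp [JmulFun, hμ, hν']
      linear_combination (-(1 + ζ)) * h4i + 2 * h2i
    · simp [JmulFun, hμ, hν']
      linear_combination (-(4 * α - 1 - ζ)) * h4i + 2 * h2i
    · simp [JmulFun, hμ, hν']
  have ht4 : (4 * (α * (α - 1))) • t = ![3 - 4 * α + ζ, 1 - ζ, 4] := by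
    rw [ht, smul_smul]
    have hc : 4 * (α * (α - 1)) * (α * (α - 1))⁻¹ = 4 := by
      rw [mul_inv_eq_iff_eq_mul₀ haa]; try ring
    rw [hc]
    funext i; fin_cases i
    · simp [JmulFun, hμ, hν']
      linear_combination (-(4 * α - 1 - ζ)) * h4i + 2 * h2i
    · simp [JmulFun, hμ, hν']
      linear_combination (-(1 + ζ)) * h4i + 2 * h2i
    · simp [JmulFun, hμ, hν']
  -- the key eigen-identities on the rescaled vectors
  have keys : ζ ^ 2 • τb (τa ![1 - ζ, 3 - 4 * α + ζ, 4])
      = ![1 - ζ, 3 - 4 * α + ζ, 4] := by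
    rw [appτa, appτb]
    funext i; fin_cases i
    · simp
      linear_combination (-1 + 3 * ζ - 4 * ζ * α) * hζ
    · simp
      linear_combination (-3 + 4 * α + 5 * ζ - 20 * ζ * α + 16 * ζ * α ^ 2) * hζ
    · simp
      linear_combination (-4 + 8 * ζ - 16 * ζ * α) * hζ
  have keyt : τb (τa ![3 - 4 * α + ζ, 1 - ζ, 4])
      = ζ ^ 2 • ![3 - 4 * α + ζ, 1 - ζ, 4] := by
    rw [appτa, appτb]
    funext i; fin_cases i
    · simp
      linear_combination (-1 - ζ) * hζ
    · simp
      linear_combination (-3 + 4 * α + ζ) * hζ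
    · simp
      linear_combination (-4 : F) * hζ
  refine ⟨?_, ?_, ?_⟩
  · -- the s statement
    have Gs : ζ ^ 2 • τb (τa s) = s := by
      apply smul_right_injective (Fin 3 → F) h16a
      calc (16 * (α - 1)) • ζ ^ 2 • τb (τa s)
          = ζ ^ 2 • τb (τa ((16 * (α - 1)) • s)) := by
            rw [map_smul, map_smul]; exact smul_comm _ _ _
        _ = (16 * (α - 1)) • s := by rw [hs4, keys]
    calc τb (τa s) = (ζ⁻¹) ^ 2 • (ζ ^ 2 • τb (τa s)) := by
          rw [smul_smul, ← mul_pow, inv_mul_cancel₀ hζ0]; simp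
      _ = (ζ⁻¹) ^ 2 • s := by rw [Gs]
  · -- the t statement
    apply smul_right_injective (Fin 3 → F) h4aa
    calc (4 * (α * (α - 1))) • τb (τa t)
        = τb (τa ((4 * (α * (α - 1))) • t)) := by rw [map_smul, map_smul]
      _ = ζ ^ 2 • ((4 * (α * (α - 1))) • t) := by rw [ht4, keyt]
      _ = (4 * (α * (α - 1))) • ζ ^ 2 • t := smul_comm _ _ _
  · rw [hone, appτa, appτb]
    funext i; fin_cases i <;> (simp; try ring)
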